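/- arXiv:2007.06953 — 2 statements merged into one kernel-verified Lean document; each statement's English description precedes it below -/
import Mathlib

section
/- Perfect privacy of additive secret sharing: Fix N ≥ 1 with [NeZero N], s ≥ 1, a secret srt : ZMod N, and a distinguished index i₀ : Fin s. Define the sharing map f : ({ i : Fin s // i ≠ i₀ } → ZMod N) → (Fin s → ZMod N) by f e i = e ⟨i, h⟩ when i ≠ i₀, and f e i₀ = srt − ∑_{j} e j, so that the shares always sum to srt. Then for every index j : Fin s, the pushforward of the uniform probability distribution on ({ i // i ≠ i₀ } → ZMod N) under the map e ↦ (fun (i : { i : Fin s // i ≠ j }) => f e i) is the uniform probability distribution on { i : Fin s // i ≠ j } → ZMod N. In particular, any s−1 of the s shares are uniformly distributed, independently of the secret srt. -/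
lemma pmf_map_uniform_of_bijective {α β : Type*} [Fintype α] [Fintype β]
    [Nonempty α] [Nonempty β] (g : α → β) (hg : Function.Bijective g) :
    PMF.map g (PMF.uniformOfFintype α) = PMF.uniformOfFintype β := by
  have hcard : Fintype.card α = Fintype.card β := Fintype.card_of_bijective hg
  ext b
  obtain ⟨a, rfl⟩ := hg.2 b
  rw [PMF.map_apply, PMF.uniformOfFintype_apply, tsum_eq_single a]
  · simp [PMF.uniformOfFintype_apply, hcard]
  · intro a' h
    rw [if_neg]
    intro hgeq
    exact h (hg.1 hgeq.symm)

/-- Perfect privacy of additive secret sharing: any `s - 1` of the `s` shares of a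
secret `srt` are uniformly distributed, independently of `srt`. -/
theorem additive_secret_sharing_perfect_privacy (N : ℕ) [NeZero N] (s : ℕ)
    (hs : 1 ≤ s) (srt : ZMod N) (i₀ : Fin s)
    (f : ({ i : Fin s // i ≠ i₀ } → ZMod N) → (Fin s → ZMod N))
    (hf : ∀ (e : { i : Fin s // i ≠ i₀ } → ZMod N) (i : Fin s) (h : i ≠ i₀),
      f e i = e ⟨i, h⟩)
    (hf₀ : ∀ (e : { i : Fin s // i ≠ i₀ } → ZMod N),
      f e i₀ = srt - ∑ j : { i : Fin s // i ≠ i₀ }, e j) :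
    ∀ j : Fin s,
      PMF.map (fun e (i : { i : Fin s // i ≠ j }) => f e i.1)
          (PMF.uniformOfFintype ({ i : Fin s // i ≠ i₀ } → ZMod N))
        = PMF.uniformOfFintype ({ i : Fin s // i ≠ j } → ZMod N) := by
  intro j
  apply pmf_map_uniform_of_bijective
  rw [Fintype.bijective_iff_injective_and_card]
  constructor
  · intro e e' h
    funext x
    by_cases hxj : x.1 = j
    · -- x.1 = j, so j ≠ i₀
      have hji₀ : j ≠ i₀ := hxj ▸ x.2
      have h0 : f e i₀ = f e' i₀ := congrFun h ⟨i₀, Ne.symm hji₀⟩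
      rw [hf₀, hf₀] at h0
      have hsum : ∑ y : { i : Fin s // i ≠ i₀ }, e y
          = ∑ y : { i : Fin s // i ≠ i₀ }, e' y := by
        exact sub_right_injective h0
      have hrest : ∀ y ∈ Finset.univ.erase x, e y = e' y := by
        intro y hy
        have hyx : y ≠ x := Finset.ne_of_mem_erase hy
        have hyj : y.1 ≠ j := by
          intro hc
          exact hyx (Subtype.ext (hc.trans hxj.symm))
        have := congrFun h ⟨y.1, hyj⟩
        simpa [hf e y.1 y.2, hf e' y.1 y.2] using this
      rw [← Finset.add_sum_erase _ e (Finset.mem_univ x),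
          ← Finset.add_sum_erase _ e' (Finset.mem_univ x),
          Finset.sum_congr rfl hrest] at hsum
      exact add_right_cancel hsum
    · have := congrFun h ⟨x.1, hxj⟩
      simpa [hf e x.1 x.2, hf e' x.1 x.2] using this
  · simp only [Fintype.card_fun]
    congr 1
    rw [Fintype.card_subtype_compl, Fintype.card_subtype_compl]
    simp
end

section
/- Correctness of ColPercept's distributed gradient descent (Theorem 3): Let s, m, k be natural numbers, d : Fin s → ℕ, ι = (l : Fin s) × Fin (d l), X : Matrix (Fin m) ι ℝ with vertical partitions X^l, and fix a learning rate α : ℝ, a regularization coefficient λ : ℝ, and a function Δfun : Matrix (Fin m) (Fin k) ℝ → Matrix (Fin m) (Fin k) ℝ (mapping the prediction matrix XW to the gradient factor Δ = ∂J/∂(XW)). Define the centralized iteration W : ℕ → Matrix ι (Fin k) ℝ by W (i+1) = W i − α • (Xᵀ * Δfun (X * W i) + λ • W i), and the distributed iteration Wl : ℕ → (l : Fin s) → Matrix (Fin (d l)) (Fin k) ℝ by Wl (i+1) l = Wl i l − α • ((X^l)ᵀ * Δfun (∑_{j} X^j * Wl i j) + λ • Wl i l). If for every l the initialization satisfies Wl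 0 l = (W 0)^l (the l-th block of W 0), then for every iteration i and every l, Wl i l = (W i)^l; consequently ∑_{l} X^l * Wl i l = X * W i for all i, and the distributed algorithm computes exactly the same iterates (and hence converges to the same limit) as the centralized gradient descent on the concatenated data. -/
open Matrix

lemma sum_blocks_mul {s m k : ℕ} {d : Fin s → ℕ}
    (X : Matrix (Fin m) ((l : Fin s) × Fin (d l)) ℝ)
    (W : Matrix ((l : Fin s) × Fin (d l)) (Fin k) ℝ) :
    ∑ l : Fin s, X.submatrix id (Sigma.mk l) * W.submatrix (Sigma.mk l) id = X * W := by
  ext i j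
  simp only [Finset.sum_apply, Matrix.sum_apply, Matrix.mul_apply, Matrix.submatrix_apply, id]
  rw [← Finset.univ_sigma_univ, Finset.sum_sigma]

/-- Correctness of the distributed gradient descent: if the distributed iterates are
initialized as the blocks of the centralized initialization, then at every iteration
the distributed iterates equal the blocks of the centralized iterate, and the sum of
local products equals the centralized product. -/
theorem distributed_gradient_descent_correct (s m k : ℕ) (d : Fin s → ℕ)
    (X : Matrix (Fin m) ((l : Fin s) × Fin (d l)) ℝ)
    (α lam : ℝ)
    (Δfun : Matrix (Fin m) (Fin k) ℝ → Matrix (Fin m) (Fin k) ℝ)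
    (W : ℕ → Matrix ((l : Fin s) × Fin (d l)) (Fin k) ℝ)
    (Wl : ℕ → (l : Fin s) → Matrix (Fin (d l)) (Fin k) ℝ)
    (hW : ∀ i : ℕ, W (i + 1) = W i - α • (Xᵀ * Δfun (X * W i) + lam • W i))
    (hWl : ∀ (i : ℕ) (l : Fin s), Wl (i + 1) l =
      Wl i l - α • ((X.submatrix id (Sigma.mk l))ᵀ
        * Δfun (∑ j : Fin s, X.submatrix id (Sigma.mk j) * Wl i j) + lam • Wl i l))
    (h0 : ∀ l : Fin s, Wl 0 l = (W 0).submatrix (Sigma.mk l) id) :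
    (∀ (i : ℕ) (l : Fin s), Wl i l = (W i).submatrix (Sigma.mk l) id) ∧
      (∀ i : ℕ, ∑ l : Fin s, X.submatrix id (Sigma.mk l) * Wl i l = X * W i) := by
  have key : ∀ (i : ℕ) (l : Fin s), Wl i l = (W i).submatrix (Sigma.mk l) id := by
    intro i
    induction i with
    | zero => exact h0
    | succ n ih =>
      intro l
      have hsum : ∑ j : Fin s, X.submatrix id (Sigma.mk j) * Wl n j = X * W n := by
        rw [Finset.sum_congr rfl fun j _ => by rw [ih j]]
        exact sum_blocks_mul X (W n)
      rw [hWl n l, hW n, ih l, hsum]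
      ext a b
      simp [Matrix.mul_apply, Matrix.submatrix_apply, mul_comm]
  refine ⟨key, fun i => ?_⟩
  rw [Finset.sum_congr rfl fun j _ => by rw [key i j]]
  exact sum_blocks_mul X (W i)
end
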